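/- For n ≥ 3, there exist a, b ∈ ℕ with 1 ≤ a, b ≤ n such that 2cos(aπ/(n+1)) + 2cos(bπ/(n+1)) = 1 if and only if 5 ∣ (n+1) or 6 ∣ (n+1). -/

import Mathlib

open Real Polynomial

lemma cos_two_pi_div_three' : Real.cos (2*π/3) = -(1/2) := by
  have h : (2:ℝ)*π/3 = π - π/3 := by ring
  rw [h, Real.cos_pi_sub, Real.cos_pi_div_three]

lemma cos_le_neg_half {x : ℝ} (h1 : 2*π/3 ≤ x) (h2 : x ≤ 4*π/3) : Real.cos x ≤ -(1/2) := by
  have hpi := Real.pi_pos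
  rcases le_or_gt x π with h | h
  · rw [← cos_two_pi_div_three']
    exact Real.cos_le_cos_of_nonneg_of_le_pi (by positivity) h h1
  · have : Real.cos x = Real.cos (2*π - x) := (Real.cos_two_pi_sub x).symm
    rw [this, ← cos_two_pi_div_three']
    exact Real.cos_le_cos_of_nonneg_of_le_pi (by linarith) (by linarith) (by linarith)

lemma cos_three_pi_div_five : Real.cos (3*π/5) = (1 - Real.sqrt 5)/4 := by
  have h5 : Real.sqrt 5 ^ 2 = 5 := Real.sq_sqrt (by norm_num)
  have h1 : (3:ℝ)*π/5 = π - 2*(π/5) := by ring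
  rw [h1, Real.cos_pi_sub, Real.cos_two_mul, Real.cos_pi_div_five]
  nlinarith [h5]

lemma lemA (d : ℕ) (hd : 3 ≤ d) (h4 : d ≠ 4) (h6 : d ≠ 6) (h10 : d ≠ 10) :
    ∃ k : ℕ, Nat.Coprime k d ∧ d ≤ 3 * k ∧ 3 * k ≤ 2 * d := by
  rcases Nat.even_or_odd d with ⟨c, hc⟩ | ⟨c, hc⟩
  · rcases Nat.even_or_odd c with ⟨t, ht⟩ | ⟨t, ht⟩
    · -- d = 4t, t ≥ 2
      refine ⟨c - 1, ?_, by omega, by omega⟩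
      have hk : d = 2 + (c - 1) * 2 := by omega
      rw [hk, Nat.coprime_add_mul_left_right]
      exact Nat.coprime_two_right.mpr ⟨t - 1, by omega⟩
    · -- d = 2c, c odd ≥ 7
      have hc7 : 7 ≤ c := by omega
      refine ⟨c + 2, ?_, by omega, by omega⟩
      have hco2 : Nat.Coprime (c + 2) 2 := Nat.coprime_two_right.mpr ⟨t + 1, by omega⟩
      have hcom : Nat.Coprime (c + 2) c := by
        rw [show c + 2 = 2 + c by ring, Nat.coprime_add_self_left]
        exact Nat.coprime_two_left.mpr ⟨t, by omega⟩
      have : d = 2 * c := by omega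
      rw [this]
      exact Nat.Coprime.mul_right hco2 hcom
  · -- d odd, use (d-1)/2 = c
    refine ⟨c, ?_, by omega, by omega⟩
    rw [show d = 1 + c * 2 by omega, Nat.coprime_add_mul_left_right]
    exact Nat.coprime_one_right _

lemma aux_conj {ζ : ℂ} {N : ℕ} (hN : N ≠ 0) (hζ : IsPrimitiveRoot ζ N) (Q : Polynomial ℚ)
    (hQ : Polynomial.aeval ζ Q = 0) {k : ℕ} (hk : Nat.Coprime k N) :
    Polynomial.aeval (ζ ^ k) Q = 0 := by
  have hpos : 0 < N := Nat.pos_of_ne_zero hN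
  have hζk : IsPrimitiveRoot (ζ ^ k) N := hζ.pow_of_coprime k hk
  have h1 : minpoly ℚ ζ = Polynomial.cyclotomic N ℚ :=
    (Polynomial.cyclotomic_eq_minpoly_rat hζ hpos).symm
  have h2 : minpoly ℚ (ζ^k) = Polynomial.cyclotomic N ℚ :=
    (Polynomial.cyclotomic_eq_minpoly_rat hζk hpos).symm
  obtain ⟨c, hc⟩ := minpoly.dvd ℚ ζ hQ
  rw [hc, map_mul, h1, ← h2, minpoly.aeval, zero_mul]

lemma two_cos_pow (N : ℕ) (hN : N ≠ 0) (j : ℕ) :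
    Complex.exp (2*π*Complex.I/N) ^ j + (Complex.exp (2*π*Complex.I/N) ^ j)⁻¹
      = ((2 * Real.cos (2*π*j/N) : ℝ) : ℂ) := by
  have hNC : (N:ℂ) ≠ 0 := Nat.cast_ne_zero.mpr hN
  have h1 : (Complex.exp (2*π*Complex.I/N))^j = Complex.exp (((2*π*j/N : ℝ)) * Complex.I) := by
    rw [← Complex.exp_nat_mul]
    congr 1
    push_cast
    field_simp
  rw [h1, ← Complex.exp_neg,
    show -(((2*π*j/N : ℝ)) * Complex.I) = ((-(2*π*j/N) : ℝ)) * Complex.I by push_cast; ring,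
    Complex.exp_mul_I, Complex.exp_mul_I]
  push_cast
  simp [Complex.cos_neg, Complex.sin_neg, ← Complex.ofReal_cos]
  ring

lemma conjugates (m a b : ℕ) (ha1 : 1 ≤ a) (ham : a < m) (hb1 : 1 ≤ b) (hbm : b < m)
    (heq : 2*Real.cos (a*π/m) + 2*Real.cos (b*π/m) = 1) (k : ℕ) (hk : Nat.Coprime k (2*m)) :
    2*Real.cos (2*π*(k*a)/(2*m)) + 2*Real.cos (2*π*(k*b)/(2*m)) = 1 := by
  set N := 2*m with hNdef
  have hm : 0 < m := by omega
  have hN : N ≠ 0 := by omega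
  have hNC : (N:ℂ) ≠ 0 := Nat.cast_ne_zero.mpr hN
  set ζ : ℂ := Complex.exp (2*π*Complex.I/N) with hζdef
  have hζ : IsPrimitiveRoot ζ N := Complex.isPrimitiveRoot_exp N hN
  have hone : ζ ^ N = 1 := hζ.pow_eq_one
  -- inverse power identity
  have hinv : ∀ k' c : ℕ, c ≤ N → ζ ^ (k' * (N - c)) = (ζ ^ (k' * c))⁻¹ := by
    intro k' c hc
    refine eq_inv_of_mul_eq_one_left ?_
    rw [← pow_add, ← Nat.mul_add, Nat.sub_add_cancel hc, mul_comm, pow_mul, hone, one_pow]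
  set Q : Polynomial ℚ := X^a + X^(N-a) + X^b + X^(N-b) - 1 with hQdef
  have haev : ∀ k' : ℕ, Polynomial.aeval (ζ^k') Q
      = ((2 * Real.cos (2*π*(k'*a)/N) + 2 * Real.cos (2*π*(k'*b)/N) - 1 : ℝ) : ℂ) := by
    intro k'
    have e1 := two_cos_pow N hN (k'*a)
    have e2 := two_cos_pow N hN (k'*b)
    rw [hQdef]
    simp only [map_add, map_sub, map_pow, map_one, aeval_X]
    rw [← pow_mul, ← pow_mul, ← pow_mul, ← pow_mul,
      hinv k' a (by omega), hinv k' b (by omega)]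
    push_cast
    rw [← hζdef] at e1 e2
    push_cast at e1 e2
    linear_combination e1 + e2
  have hQζ : Polynomial.aeval ζ Q = 0 := by
    have h1 := haev 1
    rw [pow_one] at h1
    simp only [Nat.cast_one, one_mul] at h1
    rw [h1]
    have hm0 : (m:ℝ) ≠ 0 := Nat.cast_ne_zero.mpr (by omega)
    have ha' : 2*π*(a:ℝ)/(N:ℝ) = a*π/m := by
      rw [hNdef]; push_cast; field_simp
    have hb' : 2*π*(b:ℝ)/(N:ℝ) = b*π/m := by
      rw [hNdef]; push_cast; field_simp
    rw [ha', hb', heq]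
    norm_num
  have := aux_conj hN hζ Q hQζ hk
  rw [haev k] at this
  have h0 : (2 * Real.cos (2*π*(k*a)/N) + 2 * Real.cos (2*π*(k*b)/N) - 1 : ℝ) = 0 := by
    exact_mod_cast this
  rw [hNdef] at h0
  push_cast at h0
  linarith

lemma classify (m a : ℕ) (ha1 : 1 ≤ a) (ham : a < m)
    (hbound : ∀ k : ℕ, Nat.Coprime k (2*m) → -(1/2) < Real.cos (2*π*(k*a)/(2*m))) :
    (2*Real.cos (a*π/m) = 0 ∧ 4 ∣ 2*m) ∨ (2*Real.cos (a*π/m) = 1 ∧ 6 ∣ 2*m) ∨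
    (2*Real.cos (a*π/m) = (1+Real.sqrt 5)/2 ∧ 10 ∣ 2*m) ∨
    (2*Real.cos (a*π/m) = (1-Real.sqrt 5)/2 ∧ 10 ∣ 2*m) := by
  have hpi := Real.pi_pos
  set N := 2*m with hNdef
  have hm : 0 < m := by omega
  set g := Nat.gcd a N with hgdef
  have hg : 0 < g := Nat.gcd_pos_of_pos_left N (by omega)
  have hga : g ∣ a := Nat.gcd_dvd_left a N
  have hgN : g ∣ N := Nat.gcd_dvd_right a N
  set j := a / g with hjdef
  set d := N / g with hddef
  have haj : a = g * j := (Nat.mul_div_cancel' hga).symm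
  have hNd : N = g * d := (Nat.mul_div_cancel' hgN).symm
  have hjd : Nat.Coprime j d := Nat.coprime_div_gcd_div_gcd hg
  have hdN : d ∣ N := Nat.div_dvd_of_dvd hgN
  have h2a : 2 * a < N := by omega
  have h2j : 2 * j < d := by
    have hx : g * (2 * j) < g * d := by
      calc g * (2 * j) = 2 * a := by rw [haj]; ring
        _ < N := h2a
        _ = g * d := hNd
    exact Nat.lt_of_mul_lt_mul_left hx
  have hj1 : 1 ≤ j := by
    rcases Nat.eq_zero_or_pos j with h | h
    · rw [h, Nat.mul_zero] at haj; omega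
    · exact h
  have hd3 : 3 ≤ d := by omega
  have hd0 : (d:ℝ) ≠ 0 := Nat.cast_ne_zero.mpr (by omega)
  have hN0 : (N:ℝ) ≠ 0 := Nat.cast_ne_zero.mpr (by omega)
  -- transfer the bound to level d
  have hbd : ∀ k' : ℕ, Nat.Coprime k' d → -(1/2) < Real.cos (2*π*k'/d) := by
    intro k' hk'
    haveI : NeZero N := ⟨by omega⟩
    haveI : NeZero d := ⟨by omega⟩
    set jU : (ZMod d)ˣ := ZMod.unitOfCoprime j hjd with hjU
    set kU' : (ZMod d)ˣ := ZMod.unitOfCoprime k' hk' with hkU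
    obtain ⟨u, hu⟩ := ZMod.unitsMap_surjective hdN (kU' * jU⁻¹)
    set k := (u : ZMod N).val with hkdef
    have hkN : Nat.Coprime k N := ZMod.val_coe_unit_coprime u
    have e : ((k:ℕ) : ZMod d) = (ZMod.unitsMap hdN u : ZMod d) := by
      rw [ZMod.unitsMap_def, Units.coe_map, hkdef]
      simp [ZMod.natCast_val, ZMod.castHom_apply]
    have hcong : ((k : ℕ) : ZMod d) * ((j:ℕ) : ZMod d) = ((k' : ℕ) : ZMod d) := by
      rw [e, hu]
      have e2 : ((j:ℕ) : ZMod d) = (jU : ZMod d) := (ZMod.coe_unitOfCoprime j hjd).symm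
      have e3 : ((k':ℕ) : ZMod d) = (kU' : ZMod d) := (ZMod.coe_unitOfCoprime k' hk').symm
      rw [e2, e3, ← Units.val_mul, inv_mul_cancel_right]
    have hmod : k * j ≡ k' [MOD d] := by
      rw [← Nat.cast_mul] at hcong
      exact (ZMod.natCast_eq_natCast_iff _ _ _).mp hcong
    obtain ⟨t, ht⟩ : ∃ t : ℤ, (k':ℤ) - (k*j : ℕ) = d * t := hmod.dvd
    have hang1 : 2*π*((k:ℝ)*a)/N = 2*π*((k*j : ℕ):ℝ)/d := by
      have hnat : (k * a) * d = (k * j) * N := by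
        rw [haj, hNd]; ring
      have hr : ((k:ℝ)*a) * d = ((k*j : ℕ):ℝ) * N := by exact_mod_cast hnat
      push_cast at hr ⊢
      field_simp
      linear_combination hr
    have hang2 : Real.cos (2*π*((k*j:ℕ):ℝ)/d) = Real.cos (2*π*k'/d) := by
      have heq2 : (2:ℝ)*π*((k*j:ℕ):ℝ)/d = 2*π*(k':ℝ)/d + ((-t : ℤ):ℝ) * (2*π) := by
        have ht' : ((k*j:ℕ):ℝ) = (k':ℝ) - d * t := by
          have : ((k':ℤ):ℝ) - ((k*j:ℕ):ℤ) = ((d:ℤ):ℝ) * ((t:ℤ):ℝ) := by exact_mod_cast congrArg (Int.cast : ℤ → ℝ) ht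
          push_cast at this ⊢
          linarith
        rw [ht']
        push_cast
        field_simp
        ring
      rw [heq2, Real.cos_add_int_mul_two_pi]
    have hb := hbound k hkN
    rw [hNdef] at hang1
    push_cast at hang1 hang2 hb
    rw [hang1, hang2] at hb
    exact hb
  -- d ∈ {4, 6, 10}
  have hdcase : d = 4 ∨ d = 6 ∨ d = 10 := by
    by_contra hcon
    push_neg at hcon
    obtain ⟨k, hk, hlb, hub⟩ := lemA d hd3 hcon.1 hcon.2.1 hcon.2.2
    have hle : Real.cos (2*π*k/d) ≤ -(1/2) := by
      apply cos_le_neg_half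
      · rw [div_le_div_iff₀ (by norm_num) (by positivity)]
        have : (d:ℝ) ≤ 3*k := by exact_mod_cast hlb
        nlinarith
      · rw [div_le_div_iff₀ (by positivity) (by norm_num)]
        have : (3:ℝ)*k ≤ 2*d := by exact_mod_cast hub
        nlinarith
    linarith [hbd k hk]
  -- angle formula
  have hangle : (a:ℝ)*π/m = 2*π*j/d := by
    have hnat : a * d = j * N := by rw [haj, hNd]; ring
    have hr : (a:ℝ) * d = (j:ℝ) * N := by exact_mod_cast hnat
    have hm0 : (m:ℝ) ≠ 0 := Nat.cast_ne_zero.mpr (by omega)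
    rw [hNdef] at hr
    push_cast at hr
    field_simp
    nlinarith [hr]
  rcases hdcase with h | h | h
  · -- d = 4, j = 1
    have hj : j = 1 := by omega
    left
    constructor
    · rw [hangle, hj, h]
      have : (2:ℝ)*π*((1:ℕ):ℝ)/((4:ℕ):ℝ) = π/2 := by push_cast; ring
      rw [this, Real.cos_pi_div_two]
      ring
    · rw [← h]; exact hdN
  · -- d = 6 : j = 1
    have hj : j = 1 := by
      have hj12 : j = 1 ∨ j = 2 := by omega
      rcases hj12 with hj2 | hj2
      · exact hj2
      · rw [hj2, h] at hjd
        exact absurd hjd (by decide)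
    right; left
    constructor
    · rw [hangle, hj, h]
      have : (2:ℝ)*π*((1:ℕ):ℝ)/((6:ℕ):ℝ) = π/3 := by push_cast; ring
      rw [this, Real.cos_pi_div_three]
      norm_num
    · rw [← h]; exact hdN
  · -- d = 10 : j = 1 or 3
    have hj : j = 1 ∨ j = 3 := by
      have hj14 : j = 1 ∨ j = 2 ∨ j = 3 ∨ j = 4 := by omega
      rcases hj14 with hj2 | hj2 | hj2 | hj2
      · exact Or.inl hj2
      · rw [hj2, h] at hjd; exact absurd hjd (by decide)
      · exact Or.inr hj2
      · rw [hj2, h] at hjd; exact absurd hjd (by decide)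
    rcases hj with hj | hj
    · right; right; left
      constructor
      · rw [hangle, hj, h]
        have : (2:ℝ)*π*((1:ℕ):ℝ)/((10:ℕ):ℝ) = π/5 := by push_cast; ring
        rw [this, Real.cos_pi_div_five]
        ring
      · rw [← h]; exact hdN
    · right; right; right
      constructor
      · rw [hangle, hj, h]
        have : (2:ℝ)*π*((3:ℕ):ℝ)/((10:ℕ):ℝ) = 3*π/5 := by push_cast; ring
        rw [this, cos_three_pi_div_five]
        ring
      · rw [← h]; exact hdN

lemma forward (m a b : ℕ) (ha1 : 1 ≤ a) (ham : a < m) (hb1 : 1 ≤ b) (hbm : b < m)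
    (heq : 2*Real.cos (a*π/m) + 2*Real.cos (b*π/m) = 1) : 5 ∣ m ∨ 6 ∣ m := by
  have hπ := Real.pi_pos
  have hconj := conjugates m a b ha1 ham hb1 hbm heq
  have hltone : ∀ c k : ℕ, 1 ≤ c → c < m → Nat.Coprime k (2*m) →
      Real.cos (2*π*(k*c)/(2*m)) < 1 := by
    intro c k hc1 hcm hk
    rcases lt_or_eq_of_le (Real.cos_le_one (2*π*(k*c)/(2*m))) with h | h
    · exact h
    obtain ⟨z, hz⟩ := (Real.cos_eq_one_iff _).mp h
    exfalso
    have hm0 : (m:ℝ) ≠ 0 := Nat.cast_ne_zero.mpr (by omega)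
    have h1 : (z:ℝ) * (2*m) = (k:ℝ)*c := by
      have h2π : (2:ℝ)*π ≠ 0 := by positivity
      field_simp at hz
      apply mul_left_cancel₀ h2π
      linear_combination (2*π) * hz
    have h2 : (z * (2*m) : ℤ) = (k*c : ℕ) := by exact_mod_cast h1
    have h3 : ((2*m : ℕ) : ℤ) ∣ ((k*c : ℕ) : ℤ) := ⟨z, by push_cast at h2 ⊢; linarith⟩
    have h4 : (2*m) ∣ k*c := Int.ofNat_dvd.mp h3
    have h5 : (2*m) ∣ c := Nat.Coprime.dvd_of_dvd_mul_left (hk.symm) h4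
    have := Nat.le_of_dvd (by omega) h5
    omega
  have hbA : ∀ k : ℕ, Nat.Coprime k (2*m) → -(1/2) < Real.cos (2*π*(k*a)/(2*m)) := by
    intro k hk
    have h1 := hconj k hk
    have h2 := hltone b k hb1 hbm hk
    linarith
  have hbB : ∀ k : ℕ, Nat.Coprime k (2*m) → -(1/2) < Real.cos (2*π*(k*b)/(2*m)) := by
    intro k hk
    have h1 := hconj k hk
    have h2 := hltone a k ha1 ham hk
    linarith
  have hca := classify m a ha1 ham hbA
  have hcb := classify m b hb1 hbm hbB
  rcases hca with ⟨hA,hdA⟩|⟨hA,hdA⟩|⟨hA,hdA⟩|⟨hA,hdA⟩ <;>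
    rcases hcb with ⟨hB,hdB⟩|⟨hB,hdB⟩|⟨hB,hdB⟩|⟨hB,hdB⟩ <;>
      first | omega | (exfalso; linarith)

theorem stmt_11 (n : ℕ) (hn : 3 ≤ n) :
    (∃ a b : ℕ, 1 ≤ a ∧ a ≤ n ∧ 1 ≤ b ∧ b ≤ n ∧
      2 * Real.cos (a * π / (n + 1)) + 2 * Real.cos (b * π / (n + 1)) = 1)
    ↔ (5 ∣ (n + 1) ∨ 6 ∣ (n + 1)) := by
  constructor
  · rintro ⟨a, b, ha1, han, hb1, hbn, heq⟩
    have heq' : 2*Real.cos (a*π/((n+1 : ℕ):ℝ)) + 2*Real.cos (b*π/((n+1 : ℕ):ℝ)) = 1 := by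
      push_cast
      exact_mod_cast heq
    exact forward (n+1) a b ha1 (by omega) hb1 (by omega) heq'
  · intro h
    rcases h with ⟨t, ht⟩ | ⟨t, ht⟩
    · -- n + 1 = 5t
      have ht1 : 1 ≤ t := by omega
      refine ⟨t, 3*t, by omega, by omega, by omega, by omega, ?_⟩
      have htR : ((n:ℝ) + 1) = 5*t := by exact_mod_cast congrArg (Nat.cast : ℕ → ℝ) ht
      have ht0 : (t:ℝ) ≠ 0 := Nat.cast_ne_zero.mpr (by omega)
      have h1 : (t:ℝ) * π / ((n:ℝ)+1) = π/5 := by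
        rw [htR]; field_simp
      have h2 : ((3*t : ℕ):ℝ) * π / ((n:ℝ)+1) = 3*π/5 := by
        rw [htR]; push_cast; field_simp
      rw [h1, h2, Real.cos_pi_div_five, cos_three_pi_div_five]
      ring
    · -- n + 1 = 6t
      have ht1 : 1 ≤ t := by omega
      refine ⟨2*t, 3*t, by omega, by omega, by omega, by omega, ?_⟩
      have htR : ((n:ℝ) + 1) = 6*t := by exact_mod_cast congrArg (Nat.cast : ℕ → ℝ) ht
      have ht0 : (t:ℝ) ≠ 0 := Nat.cast_ne_zero.mpr (by omega)
      have h1 : ((2*t : ℕ):ℝ) * π / ((n:ℝ)+1) = π/3 := by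
        rw [htR]; push_cast; field_simp; ring
      have h2 : ((3*t : ℕ):ℝ) * π / ((n:ℝ)+1) = π/2 := by
        rw [htR]; push_cast; field_simp; ring
      rw [h1, h2, Real.cos_pi_div_three, Real.cos_pi_div_two]
      ring
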